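/- arXiv:2007.15556 — 2 statements merged into one kernel-verified Lean document; each statement's English description precedes it below -/
import Mathlib

section
/- Let G be a finite simple 4-critical graph with no (7,2)-colouring. Let x, y, z be distinct vertices of G, each of degree 3, with xy ∈ E(G), yz ∈ E(G) and xz ∉ E(G), and let y' be the neighbour of y other than x and z. Then the two neighbours of x other than y can be labelled x', x'' and the two neighbours of z other than y can be labelled z', z'' so that: x' = z', y'x'' ∈ E(G), y'z'' ∈ E(G), and x'' ≠ z''. Moreover, if x' ≠ y', then there exist two distinct vertices u and w, neither belonging to {x, y, z}, such that u is adjacent to both x' and x'', and w is adjacent to both x' and z''. -/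
open SimpleGraph

/-- The circular clique `G_{p,q}` on vertex set `ZMod p`. -/
def circClique (p q : ℕ) : SimpleGraph (ZMod p) where
  Adj i j := i ≠ j ∧ (q ≤ (i - j).val ∧ (i - j).val ≤ p - q)
    ∧ (q ≤ (j - i).val ∧ (j - i).val ≤ p - q)
  symm := ⟨fun _ _ ⟨h, h1, h2⟩ => ⟨h.symm, h2, h1⟩⟩
  loopless := ⟨fun _ h => h.1 rfl⟩

/-- `G` admits a `(p,q)`-circular colouring. -/
def HasCircColoring {V : Type*} (G : SimpleGraph V) (p q : ℕ) : Prop :=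
  Nonempty (G →g circClique p q)

/-- A graph is 4-critical. -/
def FourCritical {V : Type*} (G : SimpleGraph V) : Prop :=
  ¬ G.Colorable 3 ∧ ∀ e ∈ G.edgeSet, (G.deleteEdges {e}).Colorable 3

/-- The wheel on `n` vertices: a cycle on `n-1` vertices plus a hub. -/
def wheel (n : ℕ) : SimpleGraph (Option (Fin (n - 1))) where
  Adj u v := match u, v with
    | none, none => False
    | none, some _ => True
    | some _, none => True
    | some i, some j => (cycleGraph (n - 1)).Adj i j
  symm := ⟨by rintro (_|i) (_|j) h <;> simp_all <;> exact h.symm⟩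
  loopless := ⟨by rintro (_|i) h <;> simp_all⟩

/-!
A 3-colouring `c` of `G - xy` is proper on `G - y`, and the neighbours `x, z, y'` of `y` get
three different colours, since otherwise `c` extends to `G`. Read the colour classes as
`0, 2, 4 ∈ ℤ/7`. If the neighbours `a, d` of `y` coloured `0, 4` had no common neighbour of
colour `2`, then raising by one the colours of `a`, of its neighbours of colour `2` and of their
neighbours of colour `4`, and giving `y` colour `6`, would be a `(7,2)`-colouring of `G`.
The three pairs of neighbours of `y` give `x'`, `x''` and `z''`. Moving the uncoloured vertex
from `y` to `x` (or `z`), where `y` takes the colour of `x` (or `z`), the same argument gives `u`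
(or `w`).
-/

instance (p q : ℕ) : DecidableRel (circClique p q).Adj := fun i j =>
  inferInstanceAs (Decidable (i ≠ j ∧ (q ≤ (i - j).val ∧ (i - j).val ≤ p - q) ∧
    (q ≤ (j - i).val ∧ (j - i).val ≤ p - q)))

theorem circClique_adj_add_right {p q : ℕ} {a b : ZMod p} (c : ZMod p) :
    (circClique p q).Adj (a + c) (b + c) ↔ (circClique p q).Adj a b := by
  simp only [circClique, add_sub_add_right_eq_sub, ne_eq, add_left_inj]

section SevenTwo

variable {a b : ZMod 7}

theorem circClique_seven_two_adj_of_ne (ha : a ∈ ({0, 2, 4} : Finset (ZMod 7)))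
    (hb : b ∈ ({0, 2, 4} : Finset (ZMod 7))) (hab : a ≠ b) : (circClique 7 2).Adj a b := by
  revert a b; decide

theorem circClique_seven_two_add_one_adj (ha : a ∈ ({0, 2, 4} : Finset (ZMod 7)))
    (hb : b ∈ ({0, 2, 4} : Finset (ZMod 7))) (hab : a ≠ b) (hba : b ≠ a + 2) :
    (circClique 7 2).Adj (a + 1) b := by
  revert a b; decide

theorem circClique_seven_two_six_adj (ha : a ∈ ({0, 2, 4} : Finset (ZMod 7))) (h0 : a ≠ 0) :
    (circClique 7 2).Adj 6 a := by
  revert a; decide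

theorem circClique_seven_two_six_adj_add_one (ha : a ∈ ({0, 2, 4} : Finset (ZMod 7)))
    (h4 : a ≠ 4) : (circClique 7 2).Adj 6 (a + 1) := by
  revert a; decide

end SevenTwo

theorem Fin.pairwise_ne_of_forall_eq_or_eq_or_eq {i j k : Fin 3}
    (h : ∀ l, l = i ∨ l = j ∨ l = k) : i ≠ j ∧ i ≠ k ∧ j ≠ k := by
  revert i j k; decide

theorem Fin.exists_injective_zmod_seven {i j k : Fin 3} (hij : i ≠ j) (hik : i ≠ k)
    (hjk : j ≠ k) :
    ∃ f : Fin 3 → ZMod 7, Function.Injective f ∧ (∀ l, f l ∈ ({0, 2, 4} : Finset (ZMod 7))) ∧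
      f i = 0 ∧ f j = 2 ∧ f k = 4 := by
  refine ⟨fun l => if l = i then 0 else if l = j then 2 else 4, ?_, ?_, by simp,
    by simp [hij.symm], by simp [hik.symm, hjk.symm]⟩
  · intro l l'
    revert i j k l l'
    decide
  · intro l
    dsimp only
    split_ifs <;> decide

namespace SimpleGraph

variable {V : Type*} {G : SimpleGraph V}

theorem adj_iff_of_degree_eq_three {v a b c : V} [Fintype (G.neighborSet v)]
    (hd : G.degree v = 3) (hab : a ≠ b) (hac : a ≠ c) (hbc : b ≠ c)
    (ha : G.Adj v a) (hb : G.Adj v b) (hc : G.Adj v c) (w : V) :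
    G.Adj v w ↔ w = a ∨ w = b ∨ w = c := by
  classical
  have hsub : ({a, b, c} : Finset V) ⊆ G.neighborFinset v := by
    intro w
    simp only [Finset.mem_insert, Finset.mem_singleton, mem_neighborFinset]
    rintro (rfl | rfl | rfl) <;> assumption
  have hcard : (G.neighborFinset v).card ≤ ({a, b, c} : Finset V).card := by
    rw [card_neighborFinset_eq_degree, hd, Finset.card_eq_three.2 ⟨a, b, c, hab, hac, hbc, rfl⟩]
  rw [← mem_neighborFinset, ← Finset.eq_of_subset_of_card_le hsub hcard]
  simp

theorem deleteIncidenceSet_le_deleteEdges_singleton {x y : V} (h : G.Adj x y) :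
    G.deleteIncidenceSet y ≤ G.deleteEdges {s(x, y)} :=
  deleteEdges_anti (Set.singleton_subset_iff.2 ⟨h, Sym2.mem_mk_right x y⟩)

theorem Coloring.exists_update {α : Type*} {G' : SimpleGraph V} {y : V} (hle : G' ≤ G)
    (c : (G.deleteIncidenceSet y).Coloring α) (k : α) (hk : ∀ v, G'.Adj y v → c v ≠ k) :
    ∃ c' : G'.Coloring α, c' y = k ∧ ∀ v, v ≠ y → c' v = c v := by
  classical
  refine ⟨Coloring.mk (Function.update c y k) fun {u v} huv => ?_,
    by simp [Coloring.mk], fun v hv => by simp [Coloring.mk, hv]⟩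
  rcases eq_or_ne u y with rfl | hu
  · simpa [huv.ne'] using (hk v huv).symm
  rcases eq_or_ne v y with rfl | hv
  · simpa [hu] using hk u huv.symm
  simpa [hu, hv] using c.valid (deleteIncidenceSet_adj.2 ⟨hle huv, hu, hv⟩)

theorem exists_adj_coloring_eq_of_not_colorable {n : ℕ} {y : V} (hG : ¬ G.Colorable n)
    (c : (G.deleteIncidenceSet y).Coloring (Fin n)) (k : Fin n) : ∃ v, G.Adj y v ∧ c v = k := by
  by_contra! h
  obtain ⟨c', -⟩ := c.exists_update le_rfl k h
  exact hG ⟨c'⟩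

theorem Coloring.pairwise_ne_of_not_colorable {y a b d : V} (hG : ¬ G.Colorable 3)
    (c : (G.deleteIncidenceSet y).Coloring (Fin 3))
    (hN : ∀ v, G.Adj y v → v = a ∨ v = b ∨ v = d) : c a ≠ c b ∧ c a ≠ c d ∧ c b ≠ c d :=
  Fin.pairwise_ne_of_forall_eq_or_eq_or_eq fun k => by
    obtain ⟨v, hv, rfl⟩ := exists_adj_coloring_eq_of_not_colorable hG c k
    rcases hN v hv with rfl | rfl | rfl <;> simp

theorem hasCircColoring_seven_two_of_shift (y : V) (ρ : V → ZMod 7) (S : Set V)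
    (hρ : ∀ v, ρ v ∈ ({0, 2, 4} : Finset (ZMod 7)))
    (hproper : ∀ u v, G.Adj u v → u ≠ y → v ≠ y → ρ u ≠ ρ v)
    (hclosed : ∀ u v, u ∈ S → G.Adj u v → u ≠ y → v ≠ y → ρ v = ρ u + 2 → v ∈ S)
    (hzero : ∀ v, G.Adj y v → ρ v = 0 → v ∈ S)
    (hfour : ∀ v, G.Adj y v → ρ v = 4 → v ∉ S) :
    HasCircColoring G 7 2 := by
  classical
  have hcentre : ∀ v, G.Adj y v →
      (circClique 7 2).Adj 6 (ρ v + if v ∈ S then 1 else 0) := by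
    intro v hv
    by_cases hvS : v ∈ S
    · simpa [hvS] using circClique_seven_two_six_adj_add_one (hρ v) fun h => hfour v hv h hvS
    · simpa [hvS] using circClique_seven_two_six_adj (hρ v) fun h => hvS (hzero v hv h)
  have hshift : ∀ u v, G.Adj u v → u ≠ y → v ≠ y → u ∈ S → v ∉ S →
      (circClique 7 2).Adj (ρ u + 1) (ρ v) := fun u v huv hu hv huS hvS =>
    circClique_seven_two_add_one_adj (hρ u) (hρ v) (hproper u v huv hu hv)
      fun h => hvS (hclosed u v huS huv hu hv h)
  have hrest : ∀ u v, G.Adj u v → u ≠ y → v ≠ y →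
      (circClique 7 2).Adj (ρ u + if u ∈ S then 1 else 0) (ρ v + if v ∈ S then 1 else 0) := by
    intro u v huv hu hv
    have hne := hproper u v huv hu hv
    by_cases huS : u ∈ S <;> by_cases hvS : v ∈ S <;>
      simp only [huS, hvS, if_true, if_false, add_zero]
    · exact (circClique_adj_add_right 1).2 (circClique_seven_two_adj_of_ne (hρ u) (hρ v) hne)
    · exact hshift u v huv hu hv huS hvS
    · exact (hshift v u huv.symm hv hu hvS huS).symm
    · exact circClique_seven_two_adj_of_ne (hρ u) (hρ v) hne
  refine ⟨⟨fun v => if v = y then 6 else ρ v + if v ∈ S then 1 else 0, fun {u v} huv => ?_⟩⟩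
  rcases eq_or_ne u y with rfl | hu
  · simpa [huv.ne'] using hcentre v huv
  rcases eq_or_ne v y with rfl | hv
  · simpa [hu] using (hcentre u huv.symm).symm
  simpa [hu, hv] using hrest u v huv hu hv

theorem exists_common_neighbor_of_not_hasCircColoring (hno : ¬ HasCircColoring G 7 2)
    {y a b d : V} (c : (G.deleteIncidenceSet y).Coloring (Fin 3))
    (hN : ∀ v, G.Adj y v → v = a ∨ v = b ∨ v = d)
    (hab : c a ≠ c b) (had : c a ≠ c d) (hbd : c b ≠ c d) :
    ∃ w, w ≠ y ∧ G.Adj a w ∧ G.Adj w d ∧ c w = c b := by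
  obtain ⟨f, hf, hfE, hfa, hfb, hfd⟩ := Fin.exists_injective_zmod_seven hab had hbd
  by_contra! hcon
  refine hno (hasCircColoring_seven_two_of_shift y (fun v => f (c v))
    {v | v = a ∨ (f (c v) = 2 ∧ G.Adj a v) ∨
      (f (c v) = 4 ∧ ∃ w, w ≠ y ∧ f (c w) = 2 ∧ G.Adj a w ∧ G.Adj w v)}
    (fun v => hfE (c v))
    (fun u v huv hu hv => hf.ne (c.valid (deleteIncidenceSet_adj.2 ⟨huv, hu, hv⟩))) ?_ ?_ ?_)
  · rintro u v (rfl | ⟨hu2, hau⟩ | ⟨hu4, -⟩) huv hu hv hvu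
    · exact Or.inr (Or.inl ⟨by rw [hvu, hfa, zero_add], huv⟩)
    · exact Or.inr (Or.inr ⟨by rw [hvu, hu2]; rfl, u, hu, hu2, hau, huv⟩)
    · have := hfE (c v)
      rw [hvu, hu4] at this
      exact absurd this (by decide)
  · intro v hv h0
    rcases hN v hv with rfl | rfl | rfl
    · exact Or.inl rfl
    · exact absurd (hfb.symm.trans h0) (by decide)
    · exact absurd (hfd.symm.trans h0) (by decide)
  · intro v hv h4
    rcases hN v hv with rfl | rfl | rfl
    · exact absurd (hfa.symm.trans h4) (by decide)
    · exact absurd (hfb.symm.trans h4) (by decide)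
    · rintro (rfl | ⟨h2, -⟩ | ⟨-, w, hwy, hw2, haw, hwv⟩)
      · exact had rfl
      · exact absurd (h4.symm.trans h2) (by decide)
      · exact hcon w hwy haw hwv (hf (hw2.trans hfb.symm))

theorem exists_common_neighbor_of_path (hno : ¬ HasCircColoring G 7 2) {x y z y' m n : V}
    (c : (G.deleteIncidenceSet y).Coloring (Fin 3))
    (hNy : ∀ v, G.Adj y v ↔ v = x ∨ v = z ∨ v = y')
    (hNx : ∀ v, G.Adj x v ↔ v = y ∨ v = m ∨ v = n)
    (hxz : ¬ G.Adj x z) (hcxz : c x ≠ c z) (hcxy' : c x ≠ c y') (hczy' : c z ≠ c y')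
    (hmy : m ≠ y) (hny : n ≠ y) (hcm : c m = c y') (hcn : c n = c z) :
    ∃ u, (u ≠ x ∧ u ≠ y ∧ u ≠ z) ∧ G.Adj u m ∧ G.Adj u n ∧ c u = c x := by
  obtain ⟨c', hc'y, hc'⟩ := c.exists_update (G.deleteIncidenceSet_le x) (c x) fun v hv => by
    obtain ⟨hyv, -, hvx⟩ := deleteIncidenceSet_adj.1 hv
    rcases (hNy v).1 hyv with rfl | rfl | rfl
    · exact absurd rfl hvx
    · exact hcxz.symm
    · exact hcxy'.symm
  obtain ⟨u, hux, hmu, hun, hc'u⟩ := exists_common_neighbor_of_not_hasCircColoring hno c'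
    (a := m) (b := y) (d := n) (fun v hv => by have := (hNx v).1 hv; tauto)
    (by rw [hc' m hmy, hc'y, hcm]; exact hcxy'.symm)
    (by rw [hc' m hmy, hc' n hny, hcm, hcn]; exact hczy'.symm)
    (by rw [hc' n hny, hc'y, hcn]; exact hcxz)
  have huy : u ≠ y := by
    rintro rfl
    rcases (hNy n).1 hun with rfl | rfl | rfl
    · exact G.irrefl ((hNx _).2 (Or.inr (Or.inr rfl)))
    · exact hxz ((hNx n).2 (Or.inr (Or.inr rfl)))
    · exact hczy' hcn.symm
  have hcu : c u = c x := (hc' u huy).symm.trans (hc'u.trans hc'y)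
  exact ⟨u, ⟨hux, huy, fun h => hcxz (h ▸ hcu).symm⟩, hmu.symm, hun, hcu⟩

end SimpleGraph

theorem stmt_12_general {V : Type*} [Fintype V] (G : SimpleGraph V) [DecidableRel G.Adj]
    (hcrit : FourCritical G) (hno : ¬ HasCircColoring G 7 2)
    (x y z y' : V) (hxz : x ≠ z)
    (hdx : G.degree x = 3) (hdy : G.degree y = 3) (hdz : G.degree z = 3)
    (hexy : G.Adj x y) (heyz : G.Adj y z) (hexz : ¬ G.Adj x z)
    (hy' : G.Adj y y') (hy'x : y' ≠ x) (hy'z : y' ≠ z) :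
    ∃ x' x'' z' z'' : V,
      G.Adj x x' ∧ G.Adj x x'' ∧ x' ≠ x'' ∧ x' ≠ y ∧ x'' ≠ y ∧
      G.Adj z z' ∧ G.Adj z z'' ∧ z' ≠ z'' ∧ z' ≠ y ∧ z'' ≠ y ∧
      x' = z' ∧ G.Adj y' x'' ∧ G.Adj y' z'' ∧ x'' ≠ z'' ∧
      (x' ≠ y' → ∃ u w : V, u ≠ w ∧ u ∉ ({x, y, z} : Set V) ∧ w ∉ ({x, y, z} : Set V) ∧
        G.Adj u x' ∧ G.Adj u x'' ∧ G.Adj w x' ∧ G.Adj w z'') := by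
  obtain ⟨hG, hdel⟩ := hcrit
  obtain ⟨C⟩ := hdel _ (G.mem_edgeSet.2 hexy)
  let c : (G.deleteIncidenceSet y).Coloring (Fin 3) :=
    C.comp (.ofLE (deleteIncidenceSet_le_deleteEdges_singleton hexy))
  have hNy := adj_iff_of_degree_eq_three hdy hxz hy'x.symm hy'z.symm hexy.symm heyz hy'
  obtain ⟨hcxz, hcxy', hczy'⟩ := c.pairwise_ne_of_not_colorable hG fun v hv => (hNy v).1 hv
  obtain ⟨m, hmy, hxm, hmz, hcm⟩ := exists_common_neighbor_of_not_hasCircColoring hno c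
    (a := x) (b := y') (d := z) (fun v hv => by have := (hNy v).1 hv; tauto)
    hcxy' hcxz hczy'.symm
  obtain ⟨n, hny, hxn, hny', hcn⟩ := exists_common_neighbor_of_not_hasCircColoring hno c
    (a := x) (b := z) (d := y') (fun v hv => (hNy v).1 hv) hcxz hcxy' hczy'
  obtain ⟨n', hn'y, hzn', hn'y', hcn'⟩ := exists_common_neighbor_of_not_hasCircColoring hno c
    (a := z) (b := x) (d := y') (fun v hv => by have := (hNy v).1 hv; tauto)
    hcxz.symm hczy' hcxy'
  have hmn : m ≠ n := fun h => hczy' (hcn.symm.trans (h ▸ hcm))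
  have hmn' : m ≠ n' := fun h => hcxy' (hcn'.symm.trans (h ▸ hcm))
  have hnn' : n ≠ n' := fun h => hcxz (hcn'.symm.trans (h ▸ hcn))
  have hNx := adj_iff_of_degree_eq_three hdx hmy.symm hny.symm hmn hexy hxm hxn
  have hNz := adj_iff_of_degree_eq_three hdz hmy.symm hn'y.symm hmn' heyz.symm hmz.symm hzn'
  refine ⟨m, n, m, n', hxm, hxn, hmn, hmy, hny, hmz.symm, hzn', hmn', hmy, hn'y, rfl, hny'.symm,
    hn'y'.symm, hnn', fun _ => ?_⟩
  obtain ⟨u, ⟨hux, huy, huz⟩, hum, hun, hcu⟩ :=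
    exists_common_neighbor_of_path hno c hNy hNx hexz hcxz hcxy' hczy' hmy hny hcm hcn
  obtain ⟨w, ⟨hwz, hwy, hwx⟩, hwm, hwn', hcw⟩ :=
    exists_common_neighbor_of_path hno c (fun v => by rw [hNy v]; tauto) hNz
      (fun h => hexz h.symm) hcxz.symm hczy' hcxy' hmy hn'y hcm hcn'
  exact ⟨u, w, fun h => hcxz (hcu.symm.trans (h ▸ hcw)), by simp [hux, huy, huz],
    by simp [hwx, hwy, hwz], hum, hun, hwm, hwn'⟩

/-- Structure around a path `x,y,z` of degree-3 vertices in a 4-critical graph with no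
(7,2)-colouring. -/
theorem stmt_12 {V : Type*} [Fintype V] (G : SimpleGraph V) [DecidableRel G.Adj]
    (hcrit : FourCritical G) (hno : ¬ HasCircColoring G 7 2)
    (x y z y' : V) (hxy : x ≠ y) (hxz : x ≠ z) (hyz : y ≠ z)
    (hdx : G.degree x = 3) (hdy : G.degree y = 3) (hdz : G.degree z = 3)
    (hexy : G.Adj x y) (heyz : G.Adj y z) (hexz : ¬ G.Adj x z)
    (hy' : G.Adj y y') (hy'x : y' ≠ x) (hy'z : y' ≠ z) :
    ∃ x' x'' z' z'' : V,
      G.Adj x x' ∧ G.Adj x x'' ∧ x' ≠ x'' ∧ x' ≠ y ∧ x'' ≠ y ∧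
      G.Adj z z' ∧ G.Adj z z'' ∧ z' ≠ z'' ∧ z' ≠ y ∧ z'' ≠ y ∧
      x' = z' ∧ G.Adj y' x'' ∧ G.Adj y' z'' ∧ x'' ≠ z'' ∧
      (x' ≠ y' → ∃ u w : V, u ≠ w ∧ u ∉ ({x, y, z} : Set V) ∧ w ∉ ({x, y, z} : Set V) ∧
        G.Adj u x' ∧ G.Adj u x'' ∧ G.Adj w x' ∧ G.Adj w z'') :=
  stmt_12_general G hcrit hno x y z y' hxz hdx hdy hdz hexy heyz hexz hy' hy'x hy'z
end

section
/- Let G be a finite simple 4-critical graph with no (7,2)-colouring. Let w and t be adjacent vertices of G, each of degree 3, with a common neighbour a. Let b be the neighbour of w other than a and t, and let c be the neighbour of t other than a and w. Then ab ∈ E(G) and ac ∈ E(G). -/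
open SimpleGraph

/-!
Suppose `ab` is not an edge. A 3-colouring `C` of `G - wt` cannot be repaired on `w` and `t`
alone, which forces `C a ≠ C b` and `C c = C b`. Send the colour classes of `a`, `b` and the third
colour to `0, 4, 2 ∈ ℤ/7`, then move `a` to `6` and `b` to `5`: each stays compatible with the two
colour classes other than its own, and the only clash, `6` against `5`, is the non-edge `ab`.
Finally `w ↦ 3` and `t ↦ 1` are compatible with the colours `1, 6, 5` and `3, 6, 5 or 4` of
their neighbours, giving a `(7,2)`-colouring of `G`.
-/

open SimpleGraph

instance inst_s17 (p q : ℕ) : DecidableRel (circClique p q).Adj :=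
  fun _ _ => inferInstanceAs (Decidable (_ ∧ _ ∧ _))

-- The flag `true` marks the two shifted vertices `a` and `b`.
def classColor : Bool → Fin 3 → ZMod 7
  | false => ![0, 4, 2]
  | true => ![6, 5, 2]

lemma classColor_adj : ∀ (p q : Bool) (i j : Fin 3), i ≠ j → (p && q) = false →
    (circClique 7 2).Adj (classColor p i) (classColor q j) := by
  decide

namespace SimpleGraph

variable {V W : Type*} {G : SimpleGraph V} {w t : V}

lemma eq_or_eq_or_eq_of_adj_of_degree_eq_three {v x y z u : V} [Fintype (G.neighborSet v)]
    (hd : G.degree v = 3) (hx : G.Adj v x) (hy : G.Adj v y) (hz : G.Adj v z)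
    (hxy : x ≠ y) (hxz : x ≠ z) (hyz : y ≠ z) (hu : G.Adj v u) : u = x ∨ u = y ∨ u = z := by
  classical
  have hsub : ({x, y, z} : Finset V) ⊆ G.neighborFinset v := by
    simp [Finset.insert_subset_iff, hx, hy, hz]
  have heq := Finset.eq_of_subset_of_card_le hsub <| by
    rw [Finset.card_eq_three.2 ⟨x, y, z, hxy, hxz, hyz, rfl⟩, card_neighborFinset_eq_degree, hd]
  simpa [← heq] using (G.mem_neighborFinset v u).2 hu

lemma adj_deleteEdges_pair_of_ne {u v : V} (h : G.Adj u v) (huw : u ≠ w) (hut : u ≠ t) :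
    (G.deleteEdges {s(w, t)}).Adj u v := by
  rw [deleteEdges_adj, Set.mem_singleton_iff, Sym2.eq_iff]
  exact ⟨h, by tauto⟩

lemma map_adj_of_adj_at_pair {H : SimpleGraph W} {f : V → W}
    (hw : ∀ v, G.Adj w v → H.Adj (f w) (f v)) (ht : ∀ v, G.Adj t v → H.Adj (f t) (f v))
    (hrest : ∀ u v, G.Adj u v → u ≠ w → u ≠ t → v ≠ w → v ≠ t → H.Adj (f u) (f v))
    {u v : V} (huv : G.Adj u v) : H.Adj (f u) (f v) := by
  by_cases huw : u = w
  · exact huw ▸ hw v (huw ▸ huv)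
  by_cases hut : u = t
  · exact hut ▸ ht v (hut ▸ huv)
  by_cases hvw : v = w
  · exact (hvw ▸ hw u (hvw ▸ huv.symm)).symm
  by_cases hvt : v = t
  · exact (hvt ▸ ht u (hvt ▸ huv.symm)).symm
  exact hrest u v huv huw hut hvw hvt

lemma nonempty_coloring_of_recolor_pair {α : Type*} (hwt : w ≠ t)
    (C : (G.deleteEdges {s(w, t)}).Coloring α) {x y : α} (hxy : x ≠ y)
    (hx : ∀ u, G.Adj w u → u ≠ t → C u ≠ x) (hy : ∀ u, G.Adj t u → u ≠ w → C u ≠ y) :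
    Nonempty (G.Coloring α) := by
  classical
  set f := Function.update (Function.update C w x) t y
  have hfw : f w = x := by simp [f, hwt]
  have hft : f t = y := by simp [f]
  have hf {u} (huw : u ≠ w) (hut : u ≠ t) : f u = C u := by simp [f, huw, hut]
  refine ⟨⟨f, map_adj_of_adj_at_pair (w := w) (t := t) ?_ ?_ ?_⟩⟩
  · intro v hv
    by_cases hvt : v = t
    · simpa [hfw, hvt, hft] using hxy
    · simpa [hfw, hf hv.ne' hvt] using (hx v hv hvt).symm
  · intro v hv
    by_cases hvw : v = w
    · simpa [hft, hvw, hfw] using hxy.symm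
    · simpa [hft, hf hvw hv.ne'] using (hy v hv hvw).symm
  · intro u v huv huw hut hvw hvt
    rw [hf huw hut, hf hvw hvt]
    exact C.valid (adj_deleteEdges_pair_of_ne huv huw hut)

lemma apply_ne_and_apply_eq_of_not_colorable {a b c : V} (hG : ¬ G.Colorable 3) (hwt : w ≠ t)
    (C : (G.deleteEdges {s(w, t)}).Coloring (Fin 3))
    (hNw : ∀ u, G.Adj w u → u ≠ t → u = a ∨ u = b)
    (hNt : ∀ u, G.Adj t u → u ≠ w → u = a ∨ u = c) :
    C a ≠ C b ∧ C c = C b := by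
  by_contra h
  obtain ⟨x, y, hxa, hxb, hya, hyc, hxy⟩ :
      ∃ x y : Fin 3, x ≠ C a ∧ x ≠ C b ∧ y ≠ C a ∧ y ≠ C c ∧ x ≠ y := by
    generalize C a = i, C b = j, C c = k at h
    revert i j k
    decide
  refine hG (nonempty_coloring_of_recolor_pair hwt C hxy ?_ ?_)
  · intro u hu hut
    rcases hNw u hu hut with rfl | rfl
    exacts [hxa.symm, hxb.symm]
  · intro u hu huw
    rcases hNt u hu huw with rfl | rfl
    exacts [hya.symm, hyc.symm]

lemma hasCircColoring_seven_two_of_coloring {a b c : V} (hwt : w ≠ t) (hab : ¬ G.Adj a b)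
    (C : (G.deleteEdges {s(w, t)}).Coloring (Fin 3)) (hCa : C a = 0) (hCb : C b = 1)
    (hCc : C c = 1) (hNw : ∀ u, G.Adj w u → u ≠ t → u = a ∨ u = b)
    (hNt : ∀ u, G.Adj t u → u ≠ w → u = a ∨ u = c) :
    HasCircColoring G 7 2 := by
  classical
  set f : V → ZMod 7 := fun v =>
    if v = w then 3 else if v = t then 1 else classColor (decide (v = a ∨ v = b)) (C v)
  have hfw : f w = 3 := by simp [f]
  have hft : f t = 1 := by simp [f, hwt.symm]
  have hf {u} (huw : u ≠ w) (hut : u ≠ t) :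
      f u = classColor (decide (u = a ∨ u = b)) (C u) := by
    simp [f, huw, hut]
  refine ⟨⟨f, map_adj_of_adj_at_pair (w := w) (t := t) ?_ ?_ ?_⟩⟩
  · intro v hv
    by_cases hvt : v = t
    · rw [hvt, hfw, hft]
      decide
    rw [hfw, hf hv.ne' hvt]
    rcases hNw v hv hvt with rfl | rfl
    · rw [hCa, decide_eq_true (Or.inl rfl)]
      decide
    · rw [hCb, decide_eq_true (Or.inr rfl)]
      decide
  · intro v hv
    by_cases hvw : v = w
    · rw [hvw, hft, hfw]
      decide
    rw [hft, hf hvw hv.ne']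
    rcases hNt v hv hvw with rfl | rfl
    · rw [hCa, decide_eq_true (Or.inl rfl)]
      decide
    · rw [hCc]
      cases decide (v = a ∨ v = b) <;> decide
  · intro u v huv huw hut hvw hvt
    rw [hf huw hut, hf hvw hvt]
    refine classColor_adj _ _ _ _ (C.valid (adj_deleteEdges_pair_of_ne huv huw hut)) ?_
    simp only [Bool.and_eq_false_iff, decide_eq_false_iff_not]
    by_contra! h
    rcases h with ⟨rfl | rfl, rfl | rfl⟩
    all_goals first | exact huv.ne rfl | exact hab huv | exact hab huv.symm

theorem _root_.FourCritical.adj_of_degree_eq_three [Fintype V] [DecidableRel G.Adj] {a b c : V}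
    (hcrit : FourCritical G) (hno : ¬ HasCircColoring G 7 2)
    (hdw : G.degree w = 3) (hdt : G.degree t = 3)
    (hwt : G.Adj w t) (hwa : G.Adj w a) (hta : G.Adj t a)
    (hwb : G.Adj w b) (hba : b ≠ a) (hbt : b ≠ t)
    (htc : G.Adj t c) (hca : c ≠ a) (hcw : c ≠ w) :
    G.Adj a b := by
  by_contra hab
  have hNw : ∀ u, G.Adj w u → u ≠ t → u = a ∨ u = b := fun u hu hut =>
    (eq_or_eq_or_eq_of_adj_of_degree_eq_three hdw hwt hwa hwb hta.ne hbt.symm hba.symm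
      hu).resolve_left hut
  have hNt : ∀ u, G.Adj t u → u ≠ w → u = a ∨ u = c := fun u hu huw =>
    (eq_or_eq_or_eq_of_adj_of_degree_eq_three hdt hwt.symm hta htc hwa.ne hcw.symm hca.symm
      hu).resolve_left huw
  obtain ⟨C⟩ := hcrit.2 s(w, t) hwt
  obtain ⟨hCab, hCcb⟩ := apply_ne_and_apply_eq_of_not_colorable hcrit.1 hwt.ne C hNw hNt
  obtain ⟨σ, hσa, hσb⟩ : ∃ σ : Equiv.Perm (Fin 3), σ (C a) = 0 ∧ σ (C b) = 1 := by
    generalize C a = i, C b = j at hCab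
    revert i j
    decide
  let C' := (Embedding.completeGraph σ.toEmbedding).toHom.comp C
  exact hno <| hasCircColoring_seven_two_of_coloring hwt.ne hab C' hσa hσb
    (by simp [C', hCcb, hσb]) hNw hNt

end SimpleGraph

/-- If `w,t` are adjacent degree-3 vertices with common neighbour `a` in a 4-critical
graph with no (7,2)-colouring, and `b`, `c` are the remaining neighbours of `w`, `t`
respectively, then `ab` and `ac` are edges. -/
theorem stmt_17 {V : Type*} [Fintype V] (G : SimpleGraph V) [DecidableRel G.Adj]
    (hcrit : FourCritical G) (hno : ¬ HasCircColoring G 7 2)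
    (w t a b c : V)
    (hdw : G.degree w = 3) (hdt : G.degree t = 3)
    (hwt : G.Adj w t) (hwa : G.Adj w a) (hta : G.Adj t a)
    (hwb : G.Adj w b) (hba : b ≠ a) (hbt : b ≠ t)
    (htc : G.Adj t c) (hca : c ≠ a) (hcw : c ≠ w) :
    G.Adj a b ∧ G.Adj a c :=
  ⟨hcrit.adj_of_degree_eq_three hno hdw hdt hwt hwa hta hwb hba hbt htc hca hcw,
    hcrit.adj_of_degree_eq_three hno hdt hdw hwt.symm hta hwa htc hca hcw hwb hba hbt⟩
end
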